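/- For ρ ∈ (0,1), n ≥ 1, and γ ∈ (0,1), the correlated-model zero-default upper confidence bound is at least the independent-model bound: if p* is the unique solution of 1-γ = ∫ φ(y)(1 - Φ((Φ^{-1}(p) + √ρ y)/√(1-ρ)))^n dy, then p* ≥ 1 - (1-γ)^{1/n}. -/

import Mathlib

/-!
Put `a = √ρ`, `b = √(1 - ρ)`, `c = Φ⁻¹(p*)` and let `Y, Z` be independent standard normals. Since
`a² + b² = 1`, `bZ - aY` is again standard normal, so conditioning on `Y` gives
`E[Φ((c + aY)/b)] = P(bZ - aY ≤ c) = Φ(c) = p*`. Thus `g(Y) = 1 - Φ((c + aY)/b)` takes values in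
`[0, 1]` and has mean `1 - p*`, and Jensen's inequality for `t ↦ tⁿ` gives
`(1 - p*)ⁿ ≤ E[g(Y)ⁿ] = 1 - γ`.
-/

open MeasureTheory Real

noncomputable def stdNormalPdf (y : ℝ) : ℝ := Real.exp (-y ^ 2 / 2) / Real.sqrt (2 * Real.pi)

noncomputable def stdNormalCdf (x : ℝ) : ℝ := ∫ y in Set.Iic x, stdNormalPdf y

noncomputable def stdNormalInv : ℝ → ℝ := Function.invFun stdNormalCdf

open ProbabilityTheory Set

lemma continuous_setIntegral_Iic {μ : Measure ℝ} [NullSingletonClass μ] {f : ℝ → ℝ}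
    (hf : Integrable f μ) : Continuous fun x => ∫ y in Iic x, f y ∂μ := by
  have h (x : ℝ) : ∫ y in Iic x, f y ∂μ = (∫ y in Iic 0, f y ∂μ) + ∫ y in (0 : ℝ)..x, f y ∂μ := by
    rw [← intervalIntegral.integral_Iic_sub_Iic hf.integrableOn hf.integrableOn]; ring
  rw [funext h]
  exact continuous_const.add (hf.continuous_primitive 0)

lemma pow_integral_le_integral_pow {α : Type*} [MeasurableSpace α] {μ : Measure α}
    [IsProbabilityMeasure μ] {f : α → ℝ} (hf : AEStronglyMeasurable f μ) {C : ℝ}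
    (hf_nonneg : ∀ᵐ x ∂μ, 0 ≤ f x) (hf_le : ∀ᵐ x ∂μ, f x ≤ C) (n : ℕ) :
    (∫ x, f x ∂μ) ^ n ≤ ∫ x, f x ^ n ∂μ := by
  have hfi : Integrable f μ := .of_bound hf C <| by
    filter_upwards [hf_nonneg, hf_le] with x h0 hC
    rwa [Real.norm_of_nonneg h0]
  have hfni : Integrable (fun x => f x ^ n) μ := .of_bound (hf.pow n) (C ^ n) <| by
    filter_upwards [hf_nonneg, hf_le] with x h0 hC
    rw [Real.norm_of_nonneg (pow_nonneg h0 n)]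
    exact pow_le_pow_left₀ h0 hC n
  exact (convexOn_pow n).map_integral_le (continuous_pow n).continuousOn isClosed_Ici hf_nonneg
    hfi hfni

lemma MeasureTheory.Measure.conv_apply_Iic {μ ν : Measure ℝ} [SFinite ν] (c : ℝ) :
    (μ ∗ ν) (Iic c) = ∫⁻ x, ν (Iic (c - x)) ∂μ := by
  rw [Measure.conv, Measure.map_apply measurable_add measurableSet_Iic,
    Measure.prod_apply (measurableSet_Iic.preimage measurable_add)]
  congr! with x
  ext y
  simp [le_sub_iff_add_le']

lemma measurable_measure_Iic (μ : Measure ℝ) : Measurable fun x => μ (Iic x) :=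
  Monotone.measurable fun _ _ h => measure_mono (Iic_subset_Iic.2 h)

lemma integrable_cdf_comp (μ : Measure ℝ) {α : Type*} [MeasurableSpace α] {ν : Measure α}
    [IsFiniteMeasure ν] {f : α → ℝ} (hf : Measurable f) : Integrable (fun x => cdf μ (f x)) ν :=
  .of_bound ((monotone_cdf μ).measurable.comp hf).aestronglyMeasurable 1 <|
    ae_of_all _ fun _ => (Real.norm_of_nonneg (cdf_nonneg μ _)).trans_le (cdf_le_one μ _)

lemma gaussianReal_map_const_mul_Iic {b : ℝ} (hb : 0 < b) (t : ℝ) :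
    (gaussianReal 0 1).map (b * ·) (Iic t) = gaussianReal 0 1 (Iic (t / b)) := by
  rw [Measure.map_apply (measurable_const_mul b) measurableSet_Iic]
  congr! 1
  ext z
  simp [le_div_iff₀ hb, mul_comm]

lemma lintegral_gaussianReal_Iic_affine {a b : ℝ} (hb : 0 < b) (hab : a ^ 2 + b ^ 2 = 1)
    (c : ℝ) :
    ∫⁻ y, gaussianReal 0 1 (Iic ((c + a * y) / b)) ∂gaussianReal 0 1 =
      gaussianReal 0 1 (Iic c) := by
  have hconv : (gaussianReal 0 1).map ((-a) * ·) ∗ (gaussianReal 0 1).map (b * ·) =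
      gaussianReal 0 1 := by
    rw [gaussianReal_map_const_mul, gaussianReal_map_const_mul, gaussianReal_conv_gaussianReal]
    congr 1
    · simp
    · ext; simp [hab]
  have hm : Measurable fun x => gaussianReal 0 1 (Iic ((c - x) / b)) :=
    (measurable_measure_Iic _).comp (by fun_prop)
  conv_rhs => rw [← hconv, Measure.conv_apply_Iic]
  simp_rw [gaussianReal_map_const_mul_Iic hb]
  rw [lintegral_map hm (measurable_const_mul _)]
  simp_rw [neg_mul, sub_neg_eq_add]

lemma integral_cdf_gaussianReal_affine {a b : ℝ} (hb : 0 < b) (hab : a ^ 2 + b ^ 2 = 1)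
    (c : ℝ) :
    ∫ y, cdf (gaussianReal 0 1) ((c + a * y) / b) ∂gaussianReal 0 1 =
      cdf (gaussianReal 0 1) c := by
  have hm : Measurable fun y => gaussianReal 0 1 (Iic ((c + a * y) / b)) :=
    (measurable_measure_Iic _).comp (by fun_prop)
  simp_rw [cdf_eq_real, measureReal_def]
  rw [integral_toReal hm.aemeasurable (ae_of_all _ fun _ => measure_lt_top _ _),
    lintegral_gaussianReal_Iic_affine hb hab]

lemma stdNormalPdf_eq_gaussianPDFReal : stdNormalPdf = gaussianPDFReal 0 1 := by
  funext y
  simp [stdNormalPdf, gaussianPDFReal, div_eq_inv_mul]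

lemma stdNormalCdf_eq_cdf : stdNormalCdf = cdf (gaussianReal 0 1) := by
  funext x
  rw [cdf_eq_real, measureReal_def, gaussianReal_apply_eq_integral _ one_ne_zero,
    ENNReal.toReal_ofReal (setIntegral_nonneg measurableSet_Iic fun y _ =>
      gaussianPDFReal_nonneg _ _ y), stdNormalCdf, stdNormalPdf_eq_gaussianPDFReal]

lemma integral_stdNormalPdf_mul (h : ℝ → ℝ) :
    ∫ y, stdNormalPdf y * h y = ∫ y, h y ∂gaussianReal 0 1 := by
  rw [integral_gaussianReal_eq_integral_smul one_ne_zero, stdNormalPdf_eq_gaussianPDFReal]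
  rfl

lemma continuous_stdNormalCdf : Continuous stdNormalCdf := by
  unfold stdNormalCdf
  rw [stdNormalPdf_eq_gaussianPDFReal]
  exact continuous_setIntegral_Iic (integrable_gaussianPDFReal 0 1)

lemma stdNormalCdf_stdNormalInv {p : ℝ} (hp : p ∈ Ioo 0 1) :
    stdNormalCdf (stdNormalInv p) = p := by
  obtain ⟨x, hx⟩ := (stdNormalCdf_eq_cdf ▸ tendsto_cdf_atBot _).eventually_lt_const hp.1 |>.exists
  obtain ⟨y, hy⟩ := (stdNormalCdf_eq_cdf ▸ tendsto_cdf_atTop _).eventually_const_lt hp.2 |>.exists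
  exact Function.invFun_eq <|
    intermediate_value_univ x y continuous_stdNormalCdf ⟨hx.le, hy.le⟩

theorem correlated_bound_ge_independent_bound_general (ρ : ℝ) (hρ : ρ ∈ Set.Ioo (0:ℝ) 1)
    (n : ℕ) (hn : 1 ≤ n) (γ : ℝ)
    (pstar : ℝ) (hpstar : pstar ∈ Set.Ioo (0:ℝ) 1)
    (hsol : 1 - γ = ∫ y : ℝ, stdNormalPdf y *
      (1 - stdNormalCdf ((stdNormalInv pstar + Real.sqrt ρ * y) / Real.sqrt (1 - ρ))) ^ n) :
    pstar ≥ 1 - (1 - γ) ^ ((1:ℝ)/n) := by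
  set N := gaussianReal 0 1
  set c := stdNormalInv pstar
  have hb : 0 < √(1 - ρ) := Real.sqrt_pos.2 (by linarith [hρ.2])
  have hab : √ρ ^ 2 + √(1 - ρ) ^ 2 = 1 := by
    rw [Real.sq_sqrt hρ.1.le, Real.sq_sqrt (by linarith [hρ.2])]; ring
  have hmeas : Measurable fun y => (c + √ρ * y) / √(1 - ρ) := by fun_prop
  have hmean : ∫ y, 1 - cdf N ((c + √ρ * y) / √(1 - ρ)) ∂N = 1 - pstar := by
    rw [integral_sub (integrable_const 1) (integrable_cdf_comp N hmeas),
      integral_cdf_gaussianReal_affine hb hab, ← stdNormalCdf_eq_cdf,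
      stdNormalCdf_stdNormalInv hpstar]
    simp
  have hjensen : (1 - pstar) ^ n ≤ 1 - γ := by
    rw [hsol, integral_stdNormalPdf_mul, stdNormalCdf_eq_cdf, ← hmean]
    exact pow_integral_le_integral_pow
      (measurable_const.sub ((monotone_cdf N).measurable.comp hmeas)).aestronglyMeasurable
      (ae_of_all _ fun _ => sub_nonneg.2 (cdf_le_one N _))
      (ae_of_all _ fun _ => sub_le_self _ (cdf_nonneg N _)) n
  have h1p : 0 ≤ 1 - pstar := by linarith [hpstar.2]
  have hroot : 1 - pstar ≤ (1 - γ) ^ (n : ℝ)⁻¹ :=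
    (Real.le_rpow_inv_iff_of_pos h1p ((pow_nonneg h1p n).trans hjensen)
      (Nat.cast_pos.2 hn)).2 (by rwa [Real.rpow_natCast])
  rw [one_div]
  linarith

theorem correlated_bound_ge_independent_bound (ρ : ℝ) (hρ : ρ ∈ Set.Ioo (0:ℝ) 1)
    (n : ℕ) (hn : 1 ≤ n) (γ : ℝ) (hγ : γ ∈ Set.Ioo (0:ℝ) 1)
    (pstar : ℝ) (hpstar : pstar ∈ Set.Ioo (0:ℝ) 1)
    (hsol : 1 - γ = ∫ y : ℝ, stdNormalPdf y *
      (1 - stdNormalCdf ((stdNormalInv pstar + Real.sqrt ρ * y) / Real.sqrt (1 - ρ))) ^ n) :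
    pstar ≥ 1 - (1 - γ) ^ ((1:ℝ)/n) :=
  correlated_bound_ge_independent_bound_general ρ hρ n hn γ pstar hpstar hsol
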